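/- Let D be an integral domain with quotient field K, T an overring of D, ⋆ a semistar operation on D and ⋆' a semistar operation on T. The following are equivalent: (i) T is (⋆,⋆')-linked to D; (ii) Na(D,⋆) ⊆ Na(T,⋆'); (iii) for every nonzero D-submodule E of K, E^{⋆̃} ⊆ (ET)^{⋆̃'}; (iv) T is (⋆̃, ⋆̃')-linked to D. -/
import Mathlib


open Pointwise

/-! Basic framework for semistar operations on an integral domain `D`
with quotient field `K`. Submodules of `K` play the role of the
`D`-submodules of the quotient field. -/

section Generic

variable (R : Type*) (K : Type*) [CommRing R] [Field K] [Algebra R K]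

/-- A semistar operation on `R` (with ambient field `K`): a map on the nonzero
`R`-submodules of `K` satisfying (⋆₁), (⋆₂), (⋆₃). The map is total on
`Submodule R K`, but the axioms are only imposed on nonzero submodules. -/
structure SemistarOp where
  toFun : Submodule R K → Submodule R K
  smul' : ∀ x : K, x ≠ 0 → ∀ E : Submodule R K, E ≠ ⊥ → toFun (x • E) = x • toFun E
  mono' : ∀ E F : Submodule R K, E ≠ ⊥ → F ≠ ⊥ → E ≤ F → toFun E ≤ toFun F
  le_star' : ∀ E : Submodule R K, E ≠ ⊥ → E ≤ toFun E
  idem' : ∀ E : Submodule R K, E ≠ ⊥ → toFun (toFun E) = toFun E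

variable {R K}

/-- The `R`-submodule of `K` generated by (the image of) an ideal of `R`. -/
def idealSub (I : Ideal R) : Submodule R K := Submodule.map (Algebra.linearMap R K) I

/-- The finite-type operation `⋆_f` associated to (the function underlying) a semistar
operation: `E^{⋆_f} = ∪ { F^⋆ : F nonzero finitely generated, F ⊆ E }`. -/
def starF (f : Submodule R K → Submodule R K) (E : Submodule R K) : Submodule R K :=
  sSup {G | ∃ F : Submodule R K, F.FG ∧ F ≠ ⊥ ∧ F ≤ E ∧ G = f F}

/-- `I` is a quasi-⋆-ideal: `I ≠ 0` and `I^⋆ ∩ R = I`. -/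
def QuasiIdeal (f : Submodule R K → Submodule R K) (I : Ideal R) : Prop :=
  I ≠ ⊥ ∧ Submodule.comap (Algebra.linearMap R K) (f (idealSub I)) = I

/-- `I` is a quasi-⋆-prime: a prime quasi-⋆-ideal. -/
def QuasiPrime (f : Submodule R K → Submodule R K) (I : Ideal R) : Prop :=
  QuasiIdeal f I ∧ I.IsPrime

/-- `I` is a quasi-⋆-maximal: maximal among proper quasi-⋆-ideals. -/
def QuasiMax (f : Submodule R K → Submodule R K) (I : Ideal R) : Prop :=
  QuasiIdeal f I ∧ I ≠ ⊤ ∧ ∀ J : Ideal R, QuasiIdeal f J → J ≠ ⊤ → I ≤ J → I = J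

/-- The localization `E·R_Q` of a submodule `E` of `K` at (the complement of) `Q`:
for prime `Q` this is `{x ∈ K : s·x ∈ E for some s ∉ Q}`. -/
def locSub (Q : Ideal R) (E : Submodule R K) : Submodule R K :=
  Submodule.span R {x : K | ∃ s : R, s ∉ Q ∧ algebraMap R K s * x ∈ E}

/-- The spectral semistar operation `⋆̃` associated to `⋆`:
`E^{⋆̃} = ∩ { E R_Q : Q quasi-⋆_f-maximal }` (equal to `K` if there are none). -/
def tildeOp (f : Submodule R K → Submodule R K) (E : Submodule R K) : Submodule R K :=
  ⨅ (Q : Ideal R) (_ : QuasiMax (starF f) Q), locSub Q E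

/-- The `v`-operation `E ↦ (R :_K (R :_K E))`. -/
def vOp (E : Submodule R K) : Submodule R K := 1 / (1 / E)

/-- The `t`-operation: the finite-type operation associated to `v`. -/
def tOp : Submodule R K → Submodule R K := starF (vOp (R := R) (K := K))

/-- `R` is a Prüfer ⋆-multiplication domain: every nonzero finitely generated ideal `F`
is ⋆_f-invertible, i.e. `(F·(R :_K F))^{⋆_f} = R^⋆`. -/
def PSMD (f : Submodule R K → Submodule R K) : Prop :=
  ∀ F : Ideal R, F ≠ ⊥ → F.FG →
    starF f (idealSub F * ((1 : Submodule R K) / idealSub F)) = f 1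

/-- The content ideal of a polynomial: the ideal generated by its coefficients. -/
def contentI (h : Polynomial R) : Ideal R := Ideal.span (Set.range h.coeff)

/-- The Nagata ring `Na(R,⋆) = R[X]_{N(⋆)}`, realized as the subset
`{g/h : g, h ∈ R[X], h ≠ 0, c(h)^⋆ = R^⋆}` of the field `K(X)` of rational functions. -/
def NaSet (f : Submodule R K → Submodule R K) : Set (RatFunc K) :=
  {x | ∃ g h : Polynomial R, h ≠ 0 ∧ f (idealSub (contentI h)) = f 1 ∧
    x * algebraMap (Polynomial K) (RatFunc K) (h.map (algebraMap R K)) =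
      algebraMap (Polynomial K) (RatFunc K) (g.map (algebraMap R K))}

/-- The Nagata ring as a subring of `K(X)` (the set `NaSet` is multiplicatively
saturated, so it coincides with the subring it generates). -/
noncomputable def NaSub (f : Submodule R K → Submodule R K) : Subring (RatFunc K) :=
  Subring.closure (NaSet f)

/-- A subset `S` of `K` is integrally closed (in `K`) if every element of `K` which is a root
of a monic polynomial with coefficients in `S` lies in `S`. -/
def IntClosedSet (S : Set K) : Prop :=
  ∀ x : K, (∃ p : Polynomial K, p.Monic ∧ (∀ n, p.coeff n ∈ S) ∧ p.eval x = 0) → x ∈ S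

/-- A subset `S` of `K` is seminormal if `x² ∈ S` and `x³ ∈ S` imply `x ∈ S`. -/
def SeminormalSet (S : Set K) : Prop := ∀ x : K, x ^ 2 ∈ S → x ^ 3 ∈ S → x ∈ S

/-- `T` is `(f,g)`-linked to `T` (case `D = T` of linkedness). -/
def LinkedSelf (f g : Submodule R K → Submodule R K) : Prop :=
  ∀ G : Ideal R, G ≠ ⊥ → G.FG → f (idealSub G) = f 1 → g (idealSub G) = g 1

end Generic

section Overring

variable {D : Type*} {K : Type*} [CommRing D] [Field K] [Algebra D K]

/-- The `T`-submodule `E·T` of `K` generated by a `D`-submodule `E` of `K`. -/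
def extT (T : Subalgebra D K) (E : Submodule D K) : Submodule ↥T K :=
  Submodule.span ↥T (E : Set K)

/-- `T` is `(⋆,⋆')`-linked to `D`: for every nonzero finitely generated integral ideal `F`
of `D`, `F^⋆ = D^⋆` implies `(FT)^{⋆'} = T^{⋆'}`. -/
def LinkedF (f : Submodule D K → Submodule D K) (T : Subalgebra D K)
    (g : Submodule ↥T K → Submodule ↥T K) : Prop :=
  ∀ F : Ideal D, F ≠ ⊥ → F.FG → f (idealSub F) = f 1 → g (extT T (idealSub F)) = g 1

/-- `T` is `t`-linked to `(D,⋆)`: `T` is `(⋆, t_T)`-linked to `D`. -/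
def TLinked (f : Submodule D K → Submodule D K) (T : Subalgebra D K) : Prop :=
  LinkedF f T (tOp (R := ↥T) (K := K))

/-- The semistar operation `ℓ_{⋆,T}` on `T`:
`E^ℓ = ∩ { E T_{D∖P} : P quasi-⋆_f-prime of D }` (equal to `K` if there are none). -/
def ellOp (f : Submodule D K → Submodule D K) (T : Subalgebra D K)
    (E : Submodule ↥T K) : Submodule ↥T K :=
  ⨅ (P : Ideal D) (_ : QuasiPrime (starF f) P),
    Submodule.span ↥T {x : K | ∃ r : D, r ∉ P ∧ algebraMap D K r * x ∈ E}

/-- The localization `D_P` of `D` at a prime `P`, as a subalgebra of `K`. -/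
def Dloc (P : Ideal D) : Subalgebra D K :=
  Algebra.adjoin D {x : K | ∃ r : D, r ∉ P ∧ algebraMap D K r * x ∈ (⊥ : Subalgebra D K)}

/-- The localization `T_{D∖P}` of an overring `T` at the multiplicative set `D∖P`,
as a subalgebra of `K`. -/
def TlocD (T : Subalgebra D K) (P : Ideal D) : Subalgebra D K :=
  Algebra.adjoin D {x : K | ∃ r : D, r ∉ P ∧ algebraMap D K r * x ∈ T}

/-- The localization `T_Q` of an overring `T` at a prime `Q` of `T`,
as a subalgebra of `K`. -/
def TlocQ (T : Subalgebra D K) (Q : Ideal ↥T) : Subalgebra D K :=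
  Algebra.adjoin D {x : K | ∃ t : ↥T, t ∉ Q ∧ (t : K) * x ∈ T}

/-- `T` is `(⋆,⋆')`-flat over `D`: `T` is `(⋆,⋆')`-linked to `D` and `D_{Q∩D} = T_Q`
for every quasi-⋆'_f-prime `Q` of `T`. -/
def FlatF (f : Submodule D K → Submodule D K) (T : Subalgebra D K)
    (g : Submodule ↥T K → Submodule ↥T K) : Prop :=
  LinkedF f T g ∧
    ∀ Q : Ideal ↥T, QuasiPrime (starF g) Q →
      Dloc (Q.comap (algebraMap D ↥T)) = TlocQ T Q

/-- `B` is a flat `A`-module (for subalgebras `A ⊆ B` of `K`, with the module structure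
coming from the inclusion). -/
def FlatPair (A B : Subalgebra D K) : Prop :=
  ∃ h : A ≤ B, @Module.Flat ↥A ↥B _ _ ((Subalgebra.inclusion h).toRingHom.toModule)

/-- `B` is a flat `A`-module, for subrings `A ⊆ B` of a commutative ring. -/
def FlatSubring {L : Type*} [CommRing L] (A B : Subring L) : Prop :=
  ∃ h : A ≤ B, @Module.Flat ↥A ↥B _ _ ((Subring.inclusion h).toModule)

end Overring
section GenericHelpers

open Submodule

variable {R K : Type*} [CommRing R] [Field K] [Algebra R K]

namespace SSAux

lemma one_ne_bot' : (1 : Submodule R K) ≠ ⊥ := by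
  intro h
  have h1 : (1 : K) ∈ (1 : Submodule R K) := Submodule.one_le.mp le_rfl
  rw [h, Submodule.mem_bot] at h1
  exact one_ne_zero h1

lemma ne_bot_of_le {α : Type*} [PartialOrder α] [OrderBot α] {E F : α} (hE : E ≠ ⊥) (h : E ≤ F) :
    F ≠ ⊥ := fun hF => hE (le_bot_iff.mp (hF ▸ h))

lemma algebraMap_ne_zero' (inj : Function.Injective (algebraMap R K)) {a : R} (ha : a ≠ 0) :
    algebraMap R K a ≠ 0 := fun h => ha (inj (by rw [h, map_zero]))

variable (s : SemistarOp R K)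

lemma star_mono {E F : Submodule R K} (hE : E ≠ ⊥) (h : E ≤ F) :
    s.toFun E ≤ s.toFun F := s.mono' E F hE (ne_bot_of_le hE h) h

lemma star_ne_bot {E : Submodule R K} (hE : E ≠ ⊥) : s.toFun E ≠ ⊥ :=
  ne_bot_of_le hE (s.le_star' E hE)

lemma starF_set_nonempty {E : Submodule R K} (hE : E ≠ ⊥) :
    {G | ∃ F : Submodule R K, F.FG ∧ F ≠ ⊥ ∧ F ≤ E ∧ G = s.toFun F}.Nonempty := by
  obtain ⟨x, hx, hx0⟩ := (Submodule.ne_bot_iff E).mp hE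
  exact ⟨s.toFun (Submodule.span R {x}), Submodule.span R {x}, Submodule.fg_span_singleton x,
    by simpa [Submodule.span_singleton_eq_bot] using hx0,
    by simpa [Submodule.span_le] using hx, rfl⟩

lemma starF_set_directed (E : Submodule R K) :
    DirectedOn (· ≤ ·) {G | ∃ F : Submodule R K, F.FG ∧ F ≠ ⊥ ∧ F ≤ E ∧ G = s.toFun F} := by
  rintro _ ⟨F₁, h₁f, h₁b, h₁l, rfl⟩ _ ⟨F₂, h₂f, h₂b, h₂l, rfl⟩
  exact ⟨s.toFun (F₁ ⊔ F₂), ⟨F₁ ⊔ F₂, h₁f.sup h₂f, ne_bot_of_le h₁b le_sup_left,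
      sup_le h₁l h₂l, rfl⟩,
    star_mono s h₁b le_sup_left, star_mono s h₂b le_sup_right⟩

lemma mem_starF_iff {E : Submodule R K} (hE : E ≠ ⊥) {x : K} :
    x ∈ starF s.toFun E ↔ ∃ F : Submodule R K, F.FG ∧ F ≠ ⊥ ∧ F ≤ E ∧ x ∈ s.toFun F := by
  rw [starF, Submodule.mem_sSup_of_directed (starF_set_nonempty s hE) (starF_set_directed s E)]
  constructor
  · rintro ⟨_, ⟨F, hf, hb, hl, rfl⟩, hx⟩; exact ⟨F, hf, hb, hl, hx⟩
  · rintro ⟨F, hf, hb, hl, hx⟩; exact ⟨_, ⟨F, hf, hb, hl, rfl⟩, hx⟩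

lemma star_le_starF {E F : Submodule R K} (hf : F.FG) (hb : F ≠ ⊥) (hl : F ≤ E) :
    s.toFun F ≤ starF s.toFun E := le_sSup ⟨F, hf, hb, hl, rfl⟩

lemma le_starF (E : Submodule R K) : E ≤ starF s.toFun E := by
  intro x hx
  by_cases hx0 : x = 0
  · rw [hx0]; exact zero_mem _
  · have hb : Submodule.span R {x} ≠ ⊥ := by
      simpa [Submodule.span_singleton_eq_bot] using hx0
    have hmem : x ∈ s.toFun (Submodule.span R {x}) :=
      s.le_star' _ hb (Submodule.mem_span_singleton_self x)
    exact star_le_starF s (Submodule.fg_span_singleton x) hb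
      (by simpa [Submodule.span_le] using hx) hmem

lemma starF_mono {E E' : Submodule R K} (h : E ≤ E') : starF s.toFun E ≤ starF s.toFun E' := by
  refine sSup_le ?_
  rintro _ ⟨F, hf, hb, hl, rfl⟩
  exact star_le_starF s hf hb (hl.trans h)

lemma starF_ne_bot {E : Submodule R K} (hE : E ≠ ⊥) : starF s.toFun E ≠ ⊥ :=
  ne_bot_of_le hE (le_starF s E)

lemma fg_le_starF {E G : Submodule R K} (hE : E ≠ ⊥) (hG : G.FG)
    (h : G ≤ starF s.toFun E) :
    ∃ F : Submodule R K, F.FG ∧ F ≠ ⊥ ∧ F ≤ E ∧ G ≤ s.toFun F := by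
  have hc := (Submodule.fg_iff_compact G).mp hG
  obtain ⟨_, ⟨F, hf, hb, hl, rfl⟩, hle⟩ :=
    (CompleteLattice.isCompactElement_iff_le_of_directed_sSup_le (Submodule R K) G).mp hc _
      (starF_set_nonempty s hE) (starF_set_directed s E) h
  exact ⟨F, hf, hb, hl, hle⟩

lemma starF_idem {E : Submodule R K} (hE : E ≠ ⊥) :
    starF s.toFun (starF s.toFun E) = starF s.toFun E := by
  refine le_antisymm (sSup_le ?_) (le_starF s _)
  rintro _ ⟨G, hGf, hGb, hGl, rfl⟩
  obtain ⟨F, hf, hb, hl, hle⟩ := fg_le_starF s hE hGf hGl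
  have h2 : s.toFun G ≤ s.toFun (s.toFun F) := star_mono s hGb hle
  rw [s.idem' F hb] at h2
  exact h2.trans (star_le_starF s hf hb hl)

lemma starF_of_fg {E : Submodule R K} (hf : E.FG) (hE : E ≠ ⊥) :
    starF s.toFun E = s.toFun E := by
  refine le_antisymm (sSup_le ?_) (star_le_starF s hf hE le_rfl)
  rintro _ ⟨F, hFf, hFb, hFl, rfl⟩
  exact star_mono s hFb hFl

lemma mem_idealSub {I : Ideal R} {x : K} :
    x ∈ (idealSub I : Submodule R K) ↔ ∃ a ∈ I, algebraMap R K a = x := by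
  simp [idealSub]

lemma idealSub_ne_bot (inj : Function.Injective (algebraMap R K)) {I : Ideal R} (hI : I ≠ ⊥) :
    (idealSub I : Submodule R K) ≠ ⊥ := by
  obtain ⟨a, ha, ha0⟩ := (Submodule.ne_bot_iff I).mp hI
  exact (Submodule.ne_bot_iff _).mpr ⟨algebraMap R K a, mem_idealSub.mpr ⟨a, ha, rfl⟩,
    algebraMap_ne_zero' inj ha0⟩

lemma idealSub_le_one {I : Ideal R} : (idealSub I : Submodule R K) ≤ 1 := by
  rintro x hx
  obtain ⟨a, _, rfl⟩ := mem_idealSub.mp hx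
  exact Submodule.mem_one.mpr ⟨a, rfl⟩

lemma le_closure (I : Ideal R) :
    I ≤ Submodule.comap (Algebra.linearMap R K) (starF s.toFun (idealSub I)) := by
  intro a ha
  rw [Submodule.mem_comap]
  exact le_starF s _ (Submodule.mem_map_of_mem ha)

lemma quasi_closure (inj : Function.Injective (algebraMap R K)) {I : Ideal R} (hI : I ≠ ⊥) :
    QuasiIdeal (starF s.toFun)
      (Submodule.comap (Algebra.linearMap R K) (starF s.toFun (idealSub I))) := by
  set J := Submodule.comap (Algebra.linearMap R K) (starF s.toFun (idealSub I)) with hJ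
  have hIJ : I ≤ J := le_closure s I
  refine ⟨ne_bot_of_le hI hIJ, le_antisymm ?_ (le_closure s J)⟩
  have h1 : (idealSub J : Submodule R K) ≤ starF s.toFun (idealSub I) :=
    Submodule.map_comap_le _ _
  have h2 : starF s.toFun (idealSub J) ≤ starF s.toFun (idealSub I) := by
    calc starF s.toFun (idealSub J) ≤ starF s.toFun (starF s.toFun (idealSub I)) :=
          starF_mono s h1
    _ = starF s.toFun (idealSub I) := starF_idem s (idealSub_ne_bot inj hI)
  exact Submodule.comap_mono h2

lemma exists_quasiMax (inj : Function.Injective (algebraMap R K)) {I : Ideal R}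
    (hq : QuasiIdeal (starF s.toFun) I) (hp : I ≠ ⊤) :
    ∃ Q : Ideal R, QuasiMax (starF s.toFun) Q ∧ I ≤ Q := by
  set P : Set (Ideal R) := {J | QuasiIdeal (starF s.toFun) J ∧ J ≠ ⊤} with hP
  have hzorn : ∀ c ⊆ P, IsChain (· ≤ ·) c → ∀ y ∈ c, ∃ ub ∈ P, ∀ z ∈ c, z ≤ ub := by
    intro c hcP hchain y hyc
    have hdir : DirectedOn (· ≤ ·) c := hchain.directedOn
    have hyb : y ≠ ⊥ := (hcP hyc).1.1
    have hsb : (idealSub (sSup c) : Submodule R K) ≠ ⊥ :=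
      idealSub_ne_bot inj (ne_bot_of_le hyb (le_sSup hyc))
    refine ⟨sSup c, ⟨⟨ne_bot_of_le hyb (le_sSup hyc), le_antisymm ?_ (le_closure s _)⟩, ?_⟩,
      fun z hz => le_sSup hz⟩
    · intro a ha
      rw [Submodule.mem_comap] at ha
      obtain ⟨F, hFf, hFb, hFl, hFx⟩ := (mem_starF_iff s hsb).mp ha
      have hmap : (idealSub (sSup c) : Submodule R K) =
          sSup ((fun J : Ideal R => (idealSub J : Submodule R K)) '' c) := by
        rw [sSup_image]
        exact (Submodule.gc_map_comap (Algebra.linearMap R K)).l_sSup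
      have hdir2 : DirectedOn (· ≤ ·) ((fun J : Ideal R => (idealSub J : Submodule R K)) '' c) := by
        rintro _ ⟨J1, h1, rfl⟩ _ ⟨J2, h2, rfl⟩
        obtain ⟨J3, h3, l1, l2⟩ := hdir J1 h1 J2 h2
        exact ⟨_, ⟨J3, h3, rfl⟩, Submodule.map_mono l1, Submodule.map_mono l2⟩
      have hne2 : ((fun J : Ideal R => (idealSub J : Submodule R K)) '' c).Nonempty :=
        ⟨_, Set.mem_image_of_mem _ hyc⟩
      have hcF := (Submodule.fg_iff_compact F).mp hFf
      obtain ⟨_, ⟨J, hJc, rfl⟩, hFJ⟩ :=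
        (CompleteLattice.isCompactElement_iff_le_of_directed_sSup_le (Submodule R K) F).mp hcF _
          hne2 hdir2 (by rw [← hmap]; exact hFl)
      have haJ : a ∈ J := by
        rw [← (hcP hJc).1.2, Submodule.mem_comap]
        exact star_le_starF s hFf hFb hFJ hFx
      exact le_sSup hJc haJ
    · intro htop
      have h1 : (1 : R) ∈ sSup c := htop ▸ Submodule.mem_top
      obtain ⟨z, hzc, hz1⟩ := (Submodule.mem_sSup_of_directed ⟨y, hyc⟩ hdir).mp h1
      exact (hcP hzc).2 ((Ideal.eq_top_iff_one z).mpr hz1)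
  obtain ⟨m, hIm, hm⟩ := zorn_le_nonempty₀ P hzorn I ⟨hq, hp⟩
  exact ⟨m, ⟨hm.prop.1, hm.prop.2,
    fun J hJ hJt hle => le_antisymm hle (hm.2 ⟨hJ, hJt⟩ hle)⟩, hIm⟩

lemma mem_smul_submodule {a : K} {F : Submodule R K} {x : K} :
    x ∈ (a • F : Submodule R K) ↔ ∃ y ∈ F, a • y = x := by
  rw [← SetLike.mem_coe, Submodule.coe_pointwise_smul]
  exact Set.mem_smul_set

lemma smul_fg {a : K} {F : Submodule R K} (h : F.FG) : (a • F : Submodule R K).FG := by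
  obtain ⟨S, rfl⟩ := h
  rw [Submodule.smul_span]
  exact Submodule.fg_span (S.finite_toSet.smul_set)

lemma smul_ne_bot {a : K} (ha : a ≠ 0) {F : Submodule R K} (h : F ≠ ⊥) :
    (a • F : Submodule R K) ≠ ⊥ := by
  obtain ⟨y, hy, hy0⟩ := (Submodule.ne_bot_iff F).mp h
  refine (Submodule.ne_bot_iff _).mpr ⟨a • y, Submodule.smul_mem_pointwise_smul _ _ _ hy, ?_⟩
  simpa [smul_eq_mul] using mul_ne_zero ha hy0

lemma quasiMax_prime (inj : Function.Injective (algebraMap R K)) {Q : Ideal R}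
    (hQ : QuasiMax (starF s.toFun) Q) : Q.IsPrime := by
  refine ⟨hQ.2.1, ?_⟩
  intro a b hab
  by_contra hcon
  push_neg at hcon
  obtain ⟨ha, hb⟩ := hcon
  have hb0 : b ≠ 0 := fun h => hb (h ▸ Q.zero_mem)
  set J : Ideal R := Q ⊔ Ideal.span {a} with hJdef
  have hJb : J ≠ ⊥ := ne_bot_of_le hQ.1.1 le_sup_left
  set J' := Submodule.comap (Algebra.linearMap R K) (starF s.toFun (idealSub J)) with hJ'
  have hQJ' : Q ≤ J' := le_trans le_sup_left (le_closure s J)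
  have hJ'top : J' = ⊤ := by
    by_contra hne
    have heq := hQ.2.2 J' (quasi_closure s inj hJb) hne hQJ'
    have haJ : a ∈ J := Submodule.mem_sup_right (Ideal.mem_span_singleton_self a)
    exact ha (by rw [heq]; exact le_closure s J haJ)
  have h1 : (1 : R) ∈ J' := hJ'top ▸ Submodule.mem_top
  rw [hJ', Submodule.mem_comap] at h1
  have h1' : (1 : K) ∈ starF s.toFun (idealSub J) := by simpa using h1
  obtain ⟨F, hFf, hFb, hFl, hF1⟩ := (mem_starF_iff s (idealSub_ne_bot inj hJb)).mp h1'
  have hbK : algebraMap R K b ≠ 0 := algebraMap_ne_zero' inj hb0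
  have hmem : algebraMap R K b ∈ (algebraMap R K b) • s.toFun F := by
    simpa [smul_eq_mul] using Submodule.smul_mem_pointwise_smul _ (algebraMap R K b) _ hF1
  rw [← s.smul' _ hbK F hFb] at hmem
  have hsm : ((algebraMap R K b) • F : Submodule R K) ≤ idealSub Q := by
    intro x hx
    obtain ⟨y, hyF, rfl⟩ := mem_smul_submodule.mp hx
    obtain ⟨j, hjJ, rfl⟩ := mem_idealSub.mp (hFl hyF)
    have hbj : b * j ∈ Q := by
      obtain ⟨q, hq, r, hr, rfl⟩ := Submodule.mem_sup.mp hjJ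
      obtain ⟨c, rfl⟩ := Ideal.mem_span_singleton'.mp hr
      have : b * (q + c * a) = b * q + c * (a * b) := by ring
      rw [this]
      exact Q.add_mem (Q.mul_mem_left b hq) (Q.mul_mem_left c hab)
    exact mem_idealSub.mpr ⟨b * j, hbj, by rw [map_mul, smul_eq_mul]⟩
  have hfin : algebraMap R K b ∈ starF s.toFun (idealSub Q) :=
    star_le_starF s (smul_fg hFf) (smul_ne_bot hbK hFb) hsm hmem
  exact hb (by rw [← hQ.1.2]; exact Submodule.mem_comap.mpr (by simpa using hfin))

def SQmod (Q : Ideal R) (hQ : Q.IsPrime) (E : Submodule R K) : Submodule R K where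
  carrier := {x : K | ∃ t : R, t ∉ Q ∧ algebraMap R K t * x ∈ E}
  zero_mem' := ⟨1, fun h => hQ.ne_top ((Ideal.eq_top_iff_one Q).mpr h), by simp⟩
  add_mem' := by
    rintro a b ⟨t, ht, hta⟩ ⟨u, hu, hub⟩
    refine ⟨t * u, fun h => ((hQ.mem_or_mem h).elim ht hu), ?_⟩
    have heq : algebraMap R K (t * u) * (a + b) =
        u • (algebraMap R K t * a) + t • (algebraMap R K u * b) := by
      simp only [Algebra.smul_def, map_mul]; ring
    rw [heq]
    exact E.add_mem (E.smul_mem u hta) (E.smul_mem t hub)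
  smul_mem' := by
    rintro r x ⟨t, ht, htx⟩
    refine ⟨t, ht, ?_⟩
    rw [mul_smul_comm]
    exact E.smul_mem r htx

lemma locSub_eq_SQ {Q : Ideal R} (hQ : Q.IsPrime) (E : Submodule R K) :
    (locSub Q E : Submodule R K) = SQmod Q hQ E := by
  show Submodule.span R _ = _
  exact Submodule.span_eq (SQmod Q hQ E)

lemma mem_locSub {Q : Ideal R} (hQ : Q.IsPrime) {E : Submodule R K} {x : K} :
    x ∈ (locSub Q E : Submodule R K) ↔ ∃ t : R, t ∉ Q ∧ algebraMap R K t * x ∈ E := by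
  rw [locSub_eq_SQ hQ]; rfl

lemma le_locSub {Q : Ideal R} (hQ : Q ≠ ⊤) (E : Submodule R K) : E ≤ locSub Q E := by
  intro x hx
  exact Submodule.subset_span ⟨1, fun h => hQ ((Ideal.eq_top_iff_one Q).mpr h), by simpa using hx⟩

lemma locSub_mono {Q : Ideal R} {E E' : Submodule R K} (h : E ≤ E') :
    (locSub Q E : Submodule R K) ≤ locSub Q E' :=
  Submodule.span_mono (by rintro x ⟨t, ht, hx⟩; exact ⟨t, ht, h hx⟩)

lemma locSub_idem {Q : Ideal R} (hQ : Q.IsPrime) (E : Submodule R K) :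
    (locSub Q (locSub Q E) : Submodule R K) ≤ locSub Q E := by
  intro x hx
  obtain ⟨t, ht, htx⟩ := (mem_locSub hQ).mp hx
  obtain ⟨u, hu, hux⟩ := (mem_locSub hQ).mp htx
  refine (mem_locSub hQ).mpr ⟨u * t, fun h => ((hQ.mem_or_mem h).elim hu ht), ?_⟩
  rw [map_mul, mul_assoc]
  exact hux

lemma tilde_le_locSub {Q : Ideal R} (hQ : QuasiMax (starF s.toFun) Q) (E : Submodule R K) :
    tildeOp s.toFun E ≤ locSub Q E := (iInf_le _ Q).trans (iInf_le _ hQ)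

lemma le_tilde (E : Submodule R K) : E ≤ tildeOp s.toFun E :=
  le_iInf fun _ => le_iInf fun hQ => le_locSub hQ.2.1 E

lemma tilde_mono {E E' : Submodule R K} (h : E ≤ E') :
    tildeOp s.toFun E ≤ tildeOp s.toFun E' :=
  le_iInf fun Q => le_iInf fun hQ => (tilde_le_locSub s hQ E).trans (locSub_mono h)

lemma tilde_idem_le (inj : Function.Injective (algebraMap R K)) (E : Submodule R K) :
    tildeOp s.toFun (tildeOp s.toFun E) ≤ tildeOp s.toFun E :=
  le_iInf fun Q => le_iInf fun hQ =>
    ((tilde_le_locSub s hQ _).trans (locSub_mono (tilde_le_locSub s hQ E))).trans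
      (locSub_idem (quasiMax_prime s inj hQ) E)

lemma tilde_le_starF (inj : Function.Injective (algebraMap R K))
    (hFr : ∀ x : K, ∃ p q : R, q ≠ 0 ∧ algebraMap R K q * x = algebraMap R K p)
    {E : Submodule R K} (hE : E ≠ ⊥) :
    tildeOp s.toFun E ≤ starF s.toFun E := by
  intro x hx
  by_contra hxs
  have hx0 : x ≠ 0 := fun h => hxs (h ▸ (starF s.toFun E).zero_mem)
  set J : Ideal R := Submodule.comap (LinearMap.toSpanSingleton R K x) (starF s.toFun E)
    with hJdef
  have hJmem : ∀ d : R, d ∈ J ↔ algebraMap R K d * x ∈ starF s.toFun E := by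
    intro d
    rw [hJdef]
    simp [Submodule.mem_comap, LinearMap.toSpanSingleton_apply, Algebra.smul_def]
  have hJtop : J ≠ ⊤ := by
    intro h
    have h1 : (1 : R) ∈ J := h ▸ Submodule.mem_top
    rw [hJmem] at h1
    simp only [map_one, one_mul] at h1
    exact hxs h1
  have hJbot : J ≠ ⊥ := by
    obtain ⟨e, heE, he0⟩ := (Submodule.ne_bot_iff E).mp hE
    obtain ⟨p, q, hq0, hpq⟩ := hFr (x * e⁻¹)
    refine (Submodule.ne_bot_iff J).mpr ⟨q, ?_, hq0⟩
    rw [hJmem]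
    have h2 : algebraMap R K q * x = algebraMap R K p * e := by
      rw [← hpq]
      field_simp
    rw [h2, ← Algebra.smul_def]
    exact le_starF s E (E.smul_mem p heE)
  have hJq : QuasiIdeal (starF s.toFun) J := by
    refine ⟨hJbot, le_antisymm ?_ (le_closure s J)⟩
    intro d hd
    rw [Submodule.mem_comap] at hd
    obtain ⟨F, hFf, hFb, hFl, hdF⟩ :=
      (mem_starF_iff s (idealSub_ne_bot inj hJbot)).mp (by simpa using hd)
    rw [hJmem]
    have hxF : (x • F : Submodule R K) ≤ starF s.toFun E := by
      intro z hz
      obtain ⟨y, hyF, rfl⟩ := mem_smul_submodule.mp hz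
      obtain ⟨j, hjJ, rfl⟩ := mem_idealSub.mp (hFl hyF)
      have := (hJmem j).mp hjJ
      simpa [smul_eq_mul, mul_comm] using this
    have hmem : algebraMap R K d * x ∈ x • s.toFun F := by
      simpa [smul_eq_mul, mul_comm] using
        Submodule.smul_mem_pointwise_smul _ x _ hdF
    rw [← s.smul' x hx0 F hFb] at hmem
    have hfin : algebraMap R K d * x ∈ starF s.toFun (starF s.toFun E) :=
      star_le_starF s (smul_fg hFf) (smul_ne_bot hx0 hFb) hxF hmem
    rwa [starF_idem s hE] at hfin
  obtain ⟨Q, hQmax, hJQ⟩ := exists_quasiMax s inj hJq hJtop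
  have hxloc := tilde_le_locSub s hQmax E hx
  obtain ⟨t, htQ, htx⟩ := (mem_locSub (quasiMax_prime s inj hQmax)).mp hxloc
  exact htQ (hJQ ((hJmem t).mpr (le_starF s E htx)))

lemma coeff_mem_contentI (h : Polynomial R) (n : ℕ) : h.coeff n ∈ contentI h :=
  Ideal.subset_span ⟨n, rfl⟩

lemma contentI_fg (h : Polynomial R) : (contentI h).FG := by
  have heq : contentI h = Ideal.span (h.coeff '' ↑h.support) := by
    refine le_antisymm (Ideal.span_le.mpr ?_) (Ideal.span_mono ?_)
    · rintro _ ⟨n, rfl⟩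
      by_cases hn : n ∈ h.support
      · exact Ideal.subset_span ⟨n, hn, rfl⟩
      · rw [Polynomial.notMem_support_iff.mp hn]
        exact (Ideal.span _).zero_mem
    · rintro _ ⟨n, _, rfl⟩
      exact ⟨n, rfl⟩
  rw [heq]
  exact Submodule.fg_span (h.support.finite_toSet.image _)

lemma contentI_ne_bot {h : Polynomial R} (hh : h ≠ 0) : contentI h ≠ ⊥ := by
  have hn : h.coeff h.natDegree ≠ 0 := fun hc => hh (Polynomial.leadingCoeff_eq_zero.mp hc)
  intro hb
  exact hn (by simpa using (hb ▸ coeff_mem_contentI h h.natDegree :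
    h.coeff h.natDegree ∈ (⊥ : Ideal R)))

end SSAux

end GenericHelpers

section OverringHelpers

open SSAux

variable {D K : Type*} [CommRing D] [IsDomain D] [Field K] [Algebra D K] [IsFractionRing D K]
variable (T : Subalgebra D K)

namespace SSAux2

lemma injD : Function.Injective (algebraMap D K) := IsFractionRing.injective D K

lemma algT_eq (t : ↥T) : algebraMap ↥T K t = (t : K) := rfl

lemma injT : Function.Injective (algebraMap ↥T K) := fun a b h => Subtype.ext h

lemma injDT : Function.Injective (algebraMap D ↥T) := by
  intro a b h
  apply injD (D := D) (K := K)
  rw [IsScalarTower.algebraMap_apply D ↥T K, IsScalarTower.algebraMap_apply D ↥T K, h]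

lemma hFrD : ∀ x : K, ∃ p q : D, q ≠ 0 ∧ algebraMap D K q * x = algebraMap D K p := by
  intro x
  obtain ⟨p, q, hq, h⟩ := IsFractionRing.div_surjective (A := D) x
  have hq0 : algebraMap D K q ≠ 0 :=
    IsFractionRing.to_map_ne_zero_of_mem_nonZeroDivisors hq
  refine ⟨p, q, nonZeroDivisors.ne_zero hq, ?_⟩
  rw [← h]
  field_simp

lemma hFrT : ∀ x : K, ∃ p q : ↥T, q ≠ 0 ∧ algebraMap ↥T K q * x = algebraMap ↥T K p := by
  intro x
  obtain ⟨p, q, hq0, h⟩ := hFrD (D := D) (K := K) x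
  refine ⟨algebraMap D ↥T p, algebraMap D ↥T q, ?_, ?_⟩
  · intro hz
    exact hq0 (injDT T (by rw [hz, map_zero]))
  · rw [← IsScalarTower.algebraMap_apply D ↥T K, ← IsScalarTower.algebraMap_apply D ↥T K]
    exact h

lemma subset_extT (E : Submodule D K) : (E : Set K) ⊆ ((extT T E : Submodule ↥T K) : Set K) :=
  Submodule.subset_span

lemma extT_ne_bot {E : Submodule D K} (hE : E ≠ ⊥) : extT T E ≠ ⊥ := by
  obtain ⟨x, hx, hx0⟩ := (Submodule.ne_bot_iff E).mp hE
  exact (Submodule.ne_bot_iff _).mpr ⟨x, subset_extT T E hx, hx0⟩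

lemma extT_fg {E : Submodule D K} (hE : E.FG) : (extT T E).FG := by
  obtain ⟨S, rfl⟩ := hE
  rw [extT, Submodule.span_span_of_tower]
  exact Submodule.fg_span S.finite_toSet

lemma extT_le_one (F : Ideal D) : extT T (idealSub F) ≤ (1 : Submodule ↥T K) := by
  rw [extT, Submodule.span_le]
  intro x hx
  obtain ⟨a, _, rfl⟩ := mem_idealSub.mp hx
  exact Submodule.mem_one.mpr ⟨algebraMap D ↥T a,
    (IsScalarTower.algebraMap_apply D ↥T K a).symm⟩

lemma contentI_map_eq (h : Polynomial D) :
    (idealSub (contentI (h.map (algebraMap D ↥T))) : Submodule ↥T K) =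
      extT T (idealSub (contentI h)) := by
  have hcoe : ∀ n : ℕ, algebraMap ↥T K ((h.map (algebraMap D ↥T)).coeff n)
      = algebraMap D K (h.coeff n) := by
    intro n
    rw [Polynomial.coeff_map, ← IsScalarTower.algebraMap_apply D ↥T K]
  have hrhs : extT T (idealSub (contentI h)) =
      Submodule.span ↥T ((fun n : ℕ => algebraMap D K (h.coeff n)) '' Set.univ) := by
    rw [extT, idealSub, contentI, Ideal.span, Submodule.map_span, Submodule.span_span_of_tower]
    congr 1
    ext y
    constructor
    · rintro ⟨_, ⟨n, rfl⟩, rfl⟩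
      exact ⟨n, trivial, rfl⟩
    · rintro ⟨n, -, rfl⟩
      exact ⟨h.coeff n, ⟨n, rfl⟩, rfl⟩
  have hlhs : (idealSub (contentI (h.map (algebraMap D ↥T))) : Submodule ↥T K) =
      Submodule.span ↥T ((fun n : ℕ => algebraMap D K (h.coeff n)) '' Set.univ) := by
    rw [idealSub, contentI, Ideal.span, Submodule.map_span]
    congr 1
    ext y
    constructor
    · rintro ⟨_, ⟨n, rfl⟩, rfl⟩
      exact ⟨n, trivial, (hcoe n).symm⟩
    · rintro ⟨n, -, rfl⟩
      exact ⟨(h.map (algebraMap D ↥T)).coeff n, ⟨n, rfl⟩, hcoe n⟩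
  rw [hlhs, hrhs]

variable (s : SemistarOp D K) (s' : SemistarOp ↥T K)

lemma linked_to_nagata (hl : LinkedF s.toFun T s'.toFun) :
    NaSet s.toFun ⊆ NaSet s'.toFun := by
  rintro x ⟨g, h, hh0, hc, heq⟩
  refine ⟨g.map (algebraMap D ↥T), h.map (algebraMap D ↥T),
    fun hz => hh0 ((Polynomial.map_eq_zero_iff (injDT T)).mp hz), ?_, ?_⟩
  · rw [contentI_map_eq]
    exact hl (contentI h) (contentI_ne_bot hh0) (contentI_fg h) hc
  · rw [Polynomial.map_map, Polynomial.map_map, ← IsScalarTower.algebraMap_eq D ↥T K]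
    exact heq

lemma nagata_to_linked (hsub : NaSet s.toFun ⊆ NaSet s'.toFun) :
    LinkedF s.toFun T s'.toFun := by
  intro F hFb hFfg hFs
  classical
  obtain ⟨S, hS⟩ := hFfg
  set L := S.toList with hL
  set h : Polynomial D := ∑ i ∈ Finset.range L.length, Polynomial.monomial i (L.getD i 0)
    with hh
  have hcoeff : ∀ j, h.coeff j = if j < L.length then L.getD j 0 else 0 := by
    intro j
    rw [hh, Polynomial.finset_sum_coeff]
    simp only [Polynomial.coeff_monomial]
    rw [Finset.sum_ite_eq' (Finset.range L.length) j]
    simp [Finset.mem_range]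
  have hcont : contentI h = F := by
    rw [← hS]
    refine le_antisymm (Ideal.span_le.mpr ?_) (Ideal.span_le.mpr ?_)
    · rintro _ ⟨j, rfl⟩
      rw [hcoeff]
      split_ifs with hj
      · rw [List.getD_eq_getElem L 0 hj]
        exact Ideal.subset_span (Finset.mem_coe.mpr (Finset.mem_toList.mp (L.getElem_mem hj)))
      · exact zero_mem _
    · intro a ha
      have haL : a ∈ L := Finset.mem_toList.mpr ha
      obtain ⟨j, hj, hja⟩ := List.mem_iff_getElem.mp haL
      refine Ideal.subset_span ⟨j, ?_⟩
      rw [hcoeff, if_pos hj, List.getD_eq_getElem L 0 hj, hja]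
  have hh0 : h ≠ 0 := by
    intro h0
    apply hFb
    rw [← hcont, h0]
    have hr : Set.range (Polynomial.coeff (0 : Polynomial D)) = {0} := by
      ext y; simp [eq_comm]
    rw [contentI, hr]
    exact Ideal.span_singleton_eq_bot.mpr rfl
  set H : Polynomial K := h.map (algebraMap D K) with hH
  have hH0 : H ≠ 0 := (Polynomial.map_ne_zero_iff (injD (D := D) (K := K))).mpr hh0
  have hHr : algebraMap (Polynomial K) (RatFunc K) H ≠ 0 := fun hz =>
    hH0 (IsFractionRing.injective (Polynomial K) (RatFunc K) (by rw [hz, map_zero]))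
  set x : RatFunc K := (algebraMap (Polynomial K) (RatFunc K) H)⁻¹ with hx
  have hxN : x ∈ NaSet s.toFun := by
    refine ⟨1, h, hh0, by rw [hcont]; exact hFs, ?_⟩
    rw [Polynomial.map_one, map_one, hx, ← hH]
    exact inv_mul_cancel₀ hHr
  obtain ⟨g', h', hh'0, hc', heq'⟩ := hsub hxN
  have hpoly : h'.map (algebraMap ↥T K) = g'.map (algebraMap ↥T K) * H := by
    apply IsFractionRing.injective (Polynomial K) (RatFunc K)
    rw [map_mul, ← heq', hx]
    field_simp
  set A : Submodule ↥T K := extT T (idealSub F) with hA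
  have hcoefA : ∀ k, algebraMap ↥T K (h'.coeff k) ∈ A := by
    intro k
    have h1 : algebraMap ↥T K (h'.coeff k) = (h'.map (algebraMap ↥T K)).coeff k := by
      rw [Polynomial.coeff_map]
    rw [h1, hpoly, Polynomial.coeff_mul]
    refine Submodule.sum_mem _ ?_
    rintro ⟨i, j⟩ hij
    have hHj : H.coeff j ∈ (idealSub F : Submodule D K) := by
      rw [hH, Polynomial.coeff_map]
      exact mem_idealSub.mpr ⟨h.coeff j, by rw [← hcont]; exact coeff_mem_contentI h j, rfl⟩
    have h2 : (g'.map (algebraMap ↥T K)).coeff i * H.coeff j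
        = (g'.coeff i) • (H.coeff j) := by
      rw [Polynomial.coeff_map, Algebra.smul_def]
    rw [h2]
    exact A.smul_mem _ (subset_extT T _ hHj)
  have hsub2 : (idealSub (contentI h') : Submodule ↥T K) ≤ A := by
    rw [idealSub, contentI, Ideal.span, Submodule.map_span, Submodule.span_le]
    rintro _ ⟨_, ⟨k, rfl⟩, rfl⟩
    exact hcoefA k
  have hAb : A ≠ ⊥ := extT_ne_bot T (idealSub_ne_bot (injD (D := D) (K := K)) hFb)
  refine le_antisymm (star_mono s' hAb (extT_le_one T F)) ?_
  rw [← hc']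
  exact star_mono s' (idealSub_ne_bot (injT T) (contentI_ne_bot hh'0)) hsub2

lemma linked_to_sub (hl : LinkedF s.toFun T s'.toFun) :
    ∀ E : Submodule D K, E ≠ ⊥ →
      ((tildeOp s.toFun E : Submodule D K) : Set K) ⊆
        ((tildeOp s'.toFun (extT T E) : Submodule ↥T K) : Set K) := by
  intro E hE x hx
  have hxm : x ∈ tildeOp s.toFun E := hx
  rw [SetLike.mem_coe, tildeOp, Submodule.mem_iInf]
  intro Q'
  rw [Submodule.mem_iInf]
  intro hQ'
  have hQ'prime : Q'.IsPrime := quasiMax_prime s' (injT T) hQ'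
  set P : Ideal D := Ideal.comap (algebraMap D ↥T) Q' with hP
  have hPb : P ≠ ⊥ := by
    obtain ⟨t, htQ, ht0⟩ := (Submodule.ne_bot_iff Q').mp hQ'.1.1
    obtain ⟨p, q, hq0, hpq⟩ := hFrD (D := D) (K := K) (t : K)
    have htK : (t : K) ≠ 0 := fun hz => ht0 (Subtype.ext hz)
    have hp0 : p ≠ 0 := by
      intro hp
      rw [hp, map_zero] at hpq
      exact (mul_ne_zero (algebraMap_ne_zero' (injD (D := D) (K := K)) hq0) htK) hpq
    refine (Submodule.ne_bot_iff P).mpr ⟨p, ?_, hp0⟩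
    rw [hP, Ideal.mem_comap]
    have heq2 : algebraMap D ↥T p = algebraMap D ↥T q * t := by
      apply injT T
      rw [map_mul, ← IsScalarTower.algebraMap_apply D ↥T K,
        ← IsScalarTower.algebraMap_apply D ↥T K]
      exact hpq.symm
    rw [heq2]
    exact Ideal.mul_mem_left Q' _ htQ
  have hPtop : P ≠ ⊤ := by
    intro htop
    have h1 : (1 : D) ∈ P := htop ▸ Submodule.mem_top
    rw [hP, Ideal.mem_comap, map_one] at h1
    exact hQ'.2.1 ((Ideal.eq_top_iff_one Q').mpr h1)
  set clP : Ideal D := Submodule.comap (Algebra.linearMap D K) (starF s.toFun (idealSub P))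
    with hclP
  have hclq : QuasiIdeal (starF s.toFun) clP := quasi_closure s (injD (D := D) (K := K)) hPb
  have hcltop : clP ≠ ⊤ := by
    intro htop
    have h1 : (1 : D) ∈ clP := htop ▸ Submodule.mem_top
    rw [hclP, Submodule.mem_comap] at h1
    have h1' : (1 : K) ∈ starF s.toFun (idealSub P) := by simpa using h1
    obtain ⟨F, hFf, hFb2, hFl, hF1⟩ :=
      (mem_starF_iff s (idealSub_ne_bot (injD (D := D) (K := K)) hPb)).mp h1'
    set F₀ : Ideal D := Submodule.comap (Algebra.linearMap D K) F with hF₀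
    have hmapF₀ : (idealSub F₀ : Submodule D K) = F :=
      Submodule.map_comap_eq_self (hFl.trans (LinearMap.map_le_range))
    have hF₀fg : F₀.FG := by
      apply Submodule.fg_of_fg_map_injective (Algebra.linearMap D K)
        (injD (D := D) (K := K))
      show (idealSub F₀ : Submodule D K).FG
      rw [hmapF₀]; exact hFf
    have hF₀b : F₀ ≠ ⊥ := by
      intro hz
      apply hFb2
      rw [← hmapF₀, hz, idealSub, Submodule.map_bot]
    have hF₀P : F₀ ≤ P := by
      intro a ha
      have hmm : (Algebra.linearMap D K) a ∈ (idealSub P : Submodule D K) := hFl ha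
      obtain ⟨p, hp, hpe⟩ := mem_idealSub.mp hmm
      exact (injD (D := D) (K := K) hpe) ▸ hp
    have hstar : s.toFun (idealSub F₀) = s.toFun 1 := by
      rw [hmapF₀]
      refine le_antisymm (star_mono s hFb2 (hFl.trans idealSub_le_one)) ?_
      have h1le : (1 : Submodule D K) ≤ s.toFun F := Submodule.one_le.mpr hF1
      have hmono := star_mono s one_ne_bot' h1le
      rwa [s.idem' F hFb2] at hmono
    have hT := hl F₀ hF₀b hF₀fg hstar
    have hext : extT T (idealSub F₀) ≤ (idealSub Q' : Submodule ↥T K) := by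
      rw [extT, Submodule.span_le]
      intro y hy
      obtain ⟨a, haF₀, rfl⟩ := mem_idealSub.mp hy
      exact SetLike.mem_coe.mpr (mem_idealSub.mpr ⟨algebraMap D ↥T a, hF₀P haF₀,
        (IsScalarTower.algebraMap_apply D ↥T K a).symm⟩)
    have hextfg : (extT T (idealSub F₀)).FG := extT_fg T (by rw [hmapF₀]; exact hFf)
    have hextb : extT T (idealSub F₀) ≠ ⊥ := extT_ne_bot T (by rw [hmapF₀]; exact hFb2)
    have h1T : (1 : K) ∈ starF s'.toFun (idealSub Q') := by
      have h1s : (1 : K) ∈ s'.toFun (extT T (idealSub F₀)) := by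
        rw [hT]
        exact s'.le_star' 1 one_ne_bot' (Submodule.one_le.mp le_rfl)
      exact star_le_starF s' hextfg hextb hext h1s
    have h1Q : (1 : ↥T) ∈ Q' := by
      rw [← hQ'.1.2, Submodule.mem_comap]
      simpa using h1T
    exact hQ'.2.1 ((Ideal.eq_top_iff_one Q').mpr h1Q)
  obtain ⟨Q, hQmax, hclQ⟩ := exists_quasiMax s (injD (D := D) (K := K)) hclq hcltop
  have hPQ : P ≤ Q := (le_closure s P).trans hclQ
  have hxQ := tilde_le_locSub s hQmax E hxm
  obtain ⟨t0, ht0Q, ht0x⟩ := (mem_locSub (quasiMax_prime s (injD (D := D) (K := K)) hQmax)).mp hxQ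
  rw [mem_locSub hQ'prime]
  refine ⟨algebraMap D ↥T t0, fun hmem => ht0Q (hPQ (Ideal.mem_comap.mpr hmem)), ?_⟩
  rw [← IsScalarTower.algebraMap_apply D ↥T K]
  exact subset_extT T E ht0x

lemma sub_to_tilde_linked
    (h3 : ∀ E : Submodule D K, E ≠ ⊥ →
      ((tildeOp s.toFun E : Submodule D K) : Set K) ⊆
        ((tildeOp s'.toFun (extT T E) : Submodule ↥T K) : Set K)) :
    LinkedF (tildeOp s.toFun) T (tildeOp s'.toFun) := by
  intro F hFb _ hFt
  have hEb : (idealSub F : Submodule D K) ≠ ⊥ :=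
    idealSub_ne_bot (injD (D := D) (K := K)) hFb
  have h1 : (1 : K) ∈ tildeOp s.toFun (idealSub F) := by
    rw [hFt]
    exact le_tilde s 1 (Submodule.one_le.mp le_rfl)
  have h1' : (1 : K) ∈ tildeOp s'.toFun (extT T (idealSub F)) := h3 _ hEb h1
  refine le_antisymm (tilde_mono s' (extT_le_one T F)) ?_
  have hle : (1 : Submodule ↥T K) ≤ tildeOp s'.toFun (extT T (idealSub F)) :=
    Submodule.one_le.mpr h1'
  exact (tilde_mono s' hle).trans (tilde_idem_le s' (injT T) _)

lemma tilde_linked_to_linked (h4 : LinkedF (tildeOp s.toFun) T (tildeOp s'.toFun)) :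
    LinkedF s.toFun T s'.toFun := by
  intro F hFb hFfg hFs
  have hEb : (idealSub F : Submodule D K) ≠ ⊥ :=
    idealSub_ne_bot (injD (D := D) (K := K)) hFb
  have hEfg : (idealSub F : Submodule D K).FG := by
    show (Submodule.map (Algebra.linearMap D K) F).FG
    exact Submodule.FG.map _ hFfg
  have hkey : ∀ Q : Ideal D, QuasiMax (starF s.toFun) Q →
      (locSub Q (idealSub F) : Submodule D K) = locSub Q 1 := by
    intro Q hQ
    have hprime : Q.IsPrime := quasiMax_prime s (injD (D := D) (K := K)) hQ
    have hFQ : ¬ F ≤ Q := by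
      intro hle
      have h1 : (1 : K) ∈ s.toFun (idealSub F) := by
        rw [hFs]
        exact s.le_star' 1 one_ne_bot' (Submodule.one_le.mp le_rfl)
      have h2 : (1 : K) ∈ starF s.toFun (idealSub Q) :=
        star_le_starF s hEfg hEb (Submodule.map_mono hle) h1
      have h3 : (1 : D) ∈ Q := by
        rw [← hQ.1.2, Submodule.mem_comap]
        simpa using h2
      exact hQ.2.1 ((Ideal.eq_top_iff_one Q).mpr h3)
    obtain ⟨a, haF, haQ⟩ := SetLike.not_le_iff_exists.mp hFQ
    refine le_antisymm (locSub_mono idealSub_le_one) ?_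
    intro x hx
    obtain ⟨t, htQ, htx⟩ := (mem_locSub hprime).mp hx
    obtain ⟨d, hd⟩ := Submodule.mem_one.mp htx
    rw [mem_locSub hprime]
    refine ⟨t * a, fun hmem => ((hprime.mem_or_mem hmem).elim htQ haQ), ?_⟩
    have heq2 : algebraMap D K (t * a) * x = algebraMap D K a * (algebraMap D K t * x) := by
      rw [map_mul]; ring
    rw [heq2, ← hd, ← map_mul]
    exact mem_idealSub.mpr ⟨a * d, Ideal.mul_mem_right d F haF, rfl⟩
  have htildeEq : tildeOp s.toFun (idealSub F) = tildeOp s.toFun 1 := by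
    refine le_antisymm ?_ ?_
    · refine le_iInf fun Q => le_iInf fun hQ => ?_
      rw [← hkey Q hQ]
      exact tilde_le_locSub s hQ _
    · refine le_iInf fun Q => le_iInf fun hQ => ?_
      rw [hkey Q hQ]
      exact tilde_le_locSub s hQ _
  have h4' := h4 F hFb hFfg htildeEq
  set A := extT T (idealSub F) with hA
  have hAb : A ≠ ⊥ := extT_ne_bot T hEb
  have hAfg : A.FG := extT_fg T hEfg
  have h1A : (1 : K) ∈ s'.toFun A := by
    have h1 : (1 : K) ∈ tildeOp s'.toFun A := by
      rw [hA, h4']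
      exact le_tilde s' 1 (Submodule.one_le.mp le_rfl)
    have h2 := tilde_le_starF s' (injT T) (hFrT T) hAb h1
    rwa [starF_of_fg s' hAfg hAb] at h2
  refine le_antisymm (star_mono s' hAb (extT_le_one T F)) ?_
  have hmono := star_mono s' one_ne_bot' (Submodule.one_le.mpr h1A)
  rwa [s'.idem' A hAb] at hmono

end SSAux2

end OverringHelpers

/-- **Theorem 3.7.** Characterizations of semistar linkedness via Nagata rings and the
spectral operations. -/
theorem linked_iff_nagata_tfae
    {D K : Type*} [CommRing D] [IsDomain D] [Field K] [Algebra D K] [IsFractionRing D K]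
    (T : Subalgebra D K) (s : SemistarOp D K) (s' : SemistarOp ↥T K) :
    List.TFAE [
      -- (i) T is (⋆,⋆')-linked to D
      LinkedF s.toFun T s'.toFun,
      -- (ii) Na(D,⋆) ⊆ Na(T,⋆')
      NaSet s.toFun ⊆ NaSet s'.toFun,
      -- (iii) E^{⋆̃} ⊆ (ET)^{⋆̃'} for every nonzero D-submodule E of K
      ∀ E : Submodule D K, E ≠ ⊥ →
        ((tildeOp s.toFun E : Submodule D K) : Set K) ⊆
          ((tildeOp s'.toFun (extT T E) : Submodule ↥T K) : Set K),
      -- (iv) T is (⋆̃,⋆̃')-linked to D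
      LinkedF (tildeOp s.toFun) T (tildeOp s'.toFun)] := by
  tfae_have 1 → 2 := SSAux2.linked_to_nagata T s s'
  tfae_have 2 → 1 := SSAux2.nagata_to_linked T s s'
  tfae_have 1 → 3 := SSAux2.linked_to_sub T s s'
  tfae_have 3 → 4 := SSAux2.sub_to_tilde_linked T s s'
  tfae_have 4 → 1 := SSAux2.tilde_linked_to_linked T s s'
  tfae_finish
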